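/- Fix μ ∈ ℂ and x ∈ ℂ with x not lying in the real segment [−2, 2] and x² ≠ μ. For y ∈ ℂ with y ≠ 0 and y² ≠ μ, define z(y) = (xy/2)(1 − √(1 − 4(1/x² + 1/y² − μ/(x²y²)))), where √ is the principal complex square root. Then Ψ_μ(x, y; z(y)) tends to h_μ(x) as |y| → ∞ (i.e., along the filter of complements of bounded sets in ℂ). -/

import Mathlib

/-- The principal complex square root: the branch with nonnegative real part. -/
noncomputable def csqrt (w : ℂ) : ℂ := w ^ ((1 : ℂ) / 2)

/-- The edge value `Ψ_μ(x,y;z) = z/(xy) − (1/3)(1/2 − z/(xy))(μ/(x²−μ) + μ/(y²−μ))`. -/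
noncomputable def Psi (μ x y z : ℂ) : ℂ :=
  z / (x * y) - (1 / 3) * (1 / 2 - z / (x * y)) * (μ / (x ^ 2 - μ) + μ / (y ^ 2 - μ))

/-- The function `h_μ(x) = (1/2)(1 − ((x² − (2/3)μ)/(x² − μ))·√(1 − 4/x²))`. -/
noncomputable def hmu (μ x : ℂ) : ℂ :=
  (1 / 2) * (1 - ((x ^ 2 - (2 / 3) * μ) / (x ^ 2 - μ)) * csqrt (1 - 4 / x ^ 2))

/-!
Put `S(y) = √(1 − 4(1/x² + 1/y² − μ/(x²y²)))`, so that `z(y)/(xy) = (1 − S(y))/2` and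
`Ψ_μ(x,y;z(y)) = (1 − S)/2 − (S/6)(μ/(x²−μ) + μ/(y²−μ))`, which is also the shape of `h_μ(x)` with
the last summand dropped. As `|y| → ∞` the radicand tends to `1 − 4/x²`, which stays off the branch
cut `(−∞, 0]` precisely because `x ∉ [−2, 2]`; so `S(y) → √(1 − 4/x²)` by continuity of the
principal root there, while `μ/(y²−μ) → 0`.
-/

open Filter Topology Bornology Complex
open scoped ComplexOrder

lemma ne_zero_of_notMem_image_Icc {a b : ℝ} (ha : a ≤ 0) (hb : 0 ≤ b) {x : ℂ}
    (hx : x ∉ (fun r : ℝ => (r : ℂ)) '' Set.Icc a b) : x ≠ 0 := by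
  rintro rfl
  exact hx ⟨0, ⟨ha, hb⟩, ofReal_zero⟩

lemma one_sub_four_div_sq_mem_slitPlane {x : ℂ}
    (hx : x ∉ (fun r : ℝ => (r : ℂ)) '' Set.Icc (-2 : ℝ) 2) : 1 - 4 / x ^ 2 ∈ slitPlane := by
  have hx0 : x ≠ 0 := ne_zero_of_notMem_image_Icc (by norm_num) (by norm_num) hx
  rw [mem_slitPlane_iff_not_le_zero]
  intro hle
  obtain ⟨hre, him⟩ := nonpos_iff.1 hle
  set t := (1 - 4 / x ^ 2).re
  have h1t : 0 < 1 - t := by linarith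
  have hsq : x ^ 2 = ((4 / (1 - t) : ℝ) : ℂ) := by
    have ht : 1 - 4 / x ^ 2 = (t : ℂ) := Complex.ext (by simp [t]) (by simp [him])
    push_cast
    rw [eq_div_iff (by exact_mod_cast h1t.ne'), ← ht]
    field_simp
    ring
  have hreal : x = (x.re : ℂ) := Complex.ext rfl <| by
    simpa using sq_nonneg_iff.1 (hsq ▸ zero_le_real.2 (div_nonneg (by norm_num) h1t.le))
  have hre_sq : x.re ^ 2 ≤ 2 ^ 2 := by
    have : x.re ^ 2 = 4 / (1 - t) := by exact_mod_cast hreal ▸ hsq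
    rw [this, div_le_iff₀ h1t]
    linarith
  exact hx ⟨x.re, abs_le_of_sq_le_sq' hre_sq (by norm_num), hreal.symm⟩

lemma Filter.Tendsto.const_div_cobounded {α 𝕜 : Type*} [NormedDivisionRing 𝕜] {l : Filter α}
    {f : α → 𝕜} (hf : Tendsto f l (cobounded 𝕜)) (c : 𝕜) :
    Tendsto (fun a => c / f a) l (𝓝 0) := by
  simpa [div_eq_mul_inv] using (tendsto_inv₀_cobounded.comp hf).const_mul c

lemma Psi_mul_one_sub {μ x y : ℂ} (hxy : x * y ≠ 0) (s : ℂ) :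
    Psi μ x y (x * y / 2 * (1 - s)) =
      (1 - s) / 2 - s / 6 * (μ / (x ^ 2 - μ) + μ / (y ^ 2 - μ)) := by
  rw [Psi, mul_comm, mul_div_assoc, div_div_cancel_left' hxy]
  ring

lemma hmu_eq {μ x : ℂ} (hxμ : x ^ 2 ≠ μ) :
    hmu μ x = (1 - csqrt (1 - 4 / x ^ 2)) / 2 - csqrt (1 - 4 / x ^ 2) / 6 * (μ / (x ^ 2 - μ)) := by
  have : x ^ 2 - μ ≠ 0 := sub_ne_zero.2 hxμ
  rw [hmu]
  field_simp
  ring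

/-- with `x ∉ [−2,2]`, `x² ≠ μ`, and
`z(y) = (xy/2)(1 − √(1 − 4(1/x² + 1/y² − μ/(x²y²))))`, the value `Ψ_μ(x,y;z(y))`
tends to `h_μ(x)` as `|y| → ∞`, i.e. along the cobounded filter on `ℂ`. -/
theorem Psi_tendsto_hmu (μ x : ℂ)
    (hx : x ∉ (fun r : ℝ => (r : ℂ)) '' Set.Icc (-2 : ℝ) 2) (hxμ : x ^ 2 ≠ μ)
    (z : ℂ → ℂ)
    (hz : ∀ y : ℂ, z y =
      (x * y / 2) * (1 - csqrt (1 - 4 * (1 / x ^ 2 + 1 / y ^ 2 - μ / (x ^ 2 * y ^ 2))))) :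
    Filter.Tendsto (fun y : ℂ => Psi μ x y (z y)) (Bornology.cobounded ℂ)
      (nhds (hmu μ x)) := by
  have hx0 : x ≠ 0 := ne_zero_of_notMem_image_Icc (by norm_num) (by norm_num) hx
  have hsq : Tendsto (· ^ 2) (cobounded ℂ) (cobounded ℂ) :=
    tendsto_pow_cobounded_cobounded two_ne_zero
  have hdisc : Tendsto (fun y => 1 - 4 * (1 / x ^ 2 + 1 / y ^ 2 - μ / (x ^ 2 * y ^ 2)))
      (cobounded ℂ) (𝓝 (1 - 4 / x ^ 2)) := by
    have hxy : Tendsto (fun y => x ^ 2 * y ^ 2) (cobounded ℂ) (cobounded ℂ) :=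
      (tendsto_mul_left_cobounded (pow_ne_zero 2 hx0)).comp hsq
    convert (tendsto_const_nhds (x := (1 : ℂ))).sub ((tendsto_const_nhds (x := (4 : ℂ))).mul
      (((tendsto_const_nhds (x := 1 / x ^ 2)).add (hsq.const_div_cobounded 1)).sub
        (hxy.const_div_cobounded μ))) using 2
    ring
  have hS : Tendsto (fun y => csqrt (1 - 4 * (1 / x ^ 2 + 1 / y ^ 2 - μ / (x ^ 2 * y ^ 2))))
      (cobounded ℂ) (𝓝 (csqrt (1 - 4 / x ^ 2))) :=
    (continuousAt_cpow_const (one_sub_four_div_sq_mem_slitPlane hx)).tendsto.comp hdisc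
  have hvanish : Tendsto (fun y : ℂ => μ / (y ^ 2 - μ)) (cobounded ℂ) (𝓝 0) :=
    ((tendsto_sub_const_cobounded μ).comp hsq).const_div_cobounded μ
  rw [hmu_eq hxμ, ← add_zero (μ / (x ^ 2 - μ))]
  refine Tendsto.congr' ?_ (((hS.const_sub 1).div_const 2).sub
    ((hS.div_const 6).mul (tendsto_const_nhds.add hvanish)))
  filter_upwards [eventually_ne_cobounded 0] with y hy
  rw [hz, Psi_mul_one_sub (mul_ne_zero hx0 hy)]
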